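/- Let a > 0, η > 0, ε ∈ (0, η), and let h : [0, η) → ℝ be differentiable. Suppose h' ≤ a² − h² on [0, η) and h(0) ≤ −a·coth(a(η−ε)). Then h(s) ≤ −a·coth(a(η−ε) − a·s) for all s ∈ [0, η−ε), and consequently h(s) → −∞ as s → (η−ε)⁻, so h cannot be defined (finite) on all of [0, η). -/

import Mathlib

open Real Set Filter

/-- Scalar Riccati comparison behind the backward comparison (Lemma 3.2):
if `h' ≤ a² − h²` on `[0,η)` and `h(0) ≤ −a·coth(a(η−ε))`, then
`h(s) ≤ −a·coth(a(η−ε) − a·s)` on `[0,η−ε)`, and consequently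
`h(s) → −∞` as `s → (η−ε)⁻`. -/
theorem riccati_comparison_blowup (a η ε : ℝ) (ha : 0 < a) (hη : 0 < η)
    (hε : ε ∈ Set.Ioo 0 η) (h h' : ℝ → ℝ)
    (hderiv : ∀ s ∈ Set.Ico (0 : ℝ) η, HasDerivAt h (h' s) s)
    (hRic : ∀ s ∈ Set.Ico (0 : ℝ) η, h' s ≤ a ^ 2 - (h s) ^ 2)
    (h0 : h 0 ≤ -a * (Real.cosh (a * (η - ε)) / Real.sinh (a * (η - ε)))) :
    (∀ s ∈ Set.Ico (0 : ℝ) (η - ε),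
      h s ≤ -a * (Real.cosh (a * (η - ε) - a * s) / Real.sinh (a * (η - ε) - a * s))) ∧
    Filter.Tendsto h (nhdsWithin (η - ε) (Set.Iio (η - ε))) Filter.atBot := by
  obtain ⟨hε0, hεη⟩ := hε
  set T : ℝ := η - ε with hTdef
  have hT0 : 0 < T := by simp [hTdef]; linarith
  have hTη : T < η := by simp [hTdef]; linarith
  set u : ℝ → ℝ := fun s => -a * (Real.cosh (a * T - a * s) / Real.sinh (a * T - a * s))
    with hudef
  have hsinh : ∀ s < T, 0 < Real.sinh (a * T - a * s) := by
    intro s hs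
    rw [Real.sinh_pos_iff]
    nlinarith
  have hucont : ∀ s < T, ContinuousAt u s := by
    intro s hs
    apply ContinuousAt.mul continuousAt_const
    apply ContinuousAt.div
    · exact Real.continuous_cosh.continuousAt.comp (by fun_prop)
    · exact Real.continuous_sinh.continuousAt.comp (by fun_prop)
    · exact (hsinh s hs).ne'
  have huderiv : ∀ s < T, HasDerivAt u (a ^ 2 - (u s) ^ 2) s := by
    intro s hs
    have hy : HasDerivAt (fun s : ℝ => a * T - a * s) (-a) s := by
      simpa using ((hasDerivAt_id s).const_mul a).const_sub (a * T)
    have hc : HasDerivAt (fun s : ℝ => Real.cosh (a * T - a * s))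
        (Real.sinh (a * T - a * s) * (-a)) s := (Real.hasDerivAt_cosh _).comp s hy
    have hsn : HasDerivAt (fun s : ℝ => Real.sinh (a * T - a * s))
        (Real.cosh (a * T - a * s) * (-a)) s := (Real.hasDerivAt_sinh _).comp s hy
    have hne := (hsinh s hs).ne'
    have hq : HasDerivAt u _ s := (hc.fun_div hsn hne).const_mul (-a)
    convert hq using 1
    have hid := Real.cosh_sq_sub_sinh_sq (a * T - a * s)
    have hne2 : Real.sinh (a * (T - s)) ≠ 0 := by rwa [mul_sub]
    simp only [hudef]
    field_simp
    nlinarith [hid]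
  have hcomp : ∀ s ∈ Set.Ico (0 : ℝ) T, h s ≤ u s := by
    intro s₀ hs₀
    obtain ⟨hs₀0, hs₀T⟩ := hs₀
    have hu0 : h 0 ≤ u 0 := by
      simpa [hudef] using h0
    rcases eq_or_lt_of_le hs₀0 with rfl | hpos
    · exact hu0
    -- integrating factor argument on [0, s₀]
    have hcontf : ∀ x ∈ Set.Ico (0:ℝ) T, ContinuousAt (fun t => h t + u t) x := by
      intro x hx
      exact ((hderiv x ⟨hx.1, lt_trans hx.2 hTη⟩).continuousAt).add (hucont x hx.2)
    have hint : ∀ x ∈ Set.Icc (0:ℝ) s₀,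
        IntervalIntegrable (fun t => h t + u t) MeasureTheory.volume 0 x := by
      intro x hx
      apply ContinuousOn.intervalIntegrable
      intro t ht
      rw [Set.uIcc_of_le hx.1] at ht
      exact (hcontf t ⟨ht.1, lt_of_le_of_lt (le_trans ht.2 hx.2) hs₀T⟩).continuousWithinAt
    set F : ℝ → ℝ := fun x => ∫ t in (0:ℝ)..x, (h t + u t) with hFdef
    have hFcont : ContinuousOn F (Set.Icc 0 s₀) := by
      have := intervalIntegral.continuousOn_primitive_interval
        (f := fun t => h t + u t) (μ := MeasureTheory.volume) (a := 0) (b := s₀) ?_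
      · rwa [Set.uIcc_of_le hs₀0] at this
      · rw [Set.uIcc_of_le hs₀0]
        apply ContinuousOn.integrableOn_compact isCompact_Icc
        intro t ht
        exact (hcontf t ⟨ht.1, lt_of_le_of_lt ht.2 hs₀T⟩).continuousWithinAt
    have hmeas : ∀ x ∈ Set.Ioo (0:ℝ) T,
        StronglyMeasurableAtFilter (fun t => h t + u t) (nhds x)
          MeasureTheory.volume := by
      apply ContinuousAt.stronglyMeasurableAtFilter isOpen_Ioo
      intro x hx
      exact hcontf x ⟨le_of_lt hx.1, hx.2⟩
    have hFderiv : ∀ x ∈ Set.Ioo (0:ℝ) s₀, HasDerivAt F (h x + u x) x := by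
      intro x hx
      exact intervalIntegral.integral_hasDerivAt_right
        (hint x ⟨le_of_lt hx.1, le_of_lt hx.2⟩)
        (hmeas x ⟨hx.1, lt_trans hx.2 hs₀T⟩)
        (hcontf x ⟨le_of_lt hx.1, lt_trans hx.2 hs₀T⟩)
    set w : ℝ → ℝ := fun x => (h x - u x) * Real.exp (F x) with hwdef
    have hwcont : ContinuousOn w (Set.Icc 0 s₀) := by
      apply ContinuousOn.mul
      · intro x hx
        have hxT : x < T := lt_of_le_of_lt hx.2 hs₀T
        exact (((hderiv x ⟨hx.1, lt_trans hxT hTη⟩).continuousAt).sub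
          (hucont x hxT)).continuousWithinAt
      · exact Real.continuous_exp.comp_continuousOn hFcont
    have hwderiv : ∀ x ∈ Set.Ioo (0:ℝ) s₀, HasDerivAt w
        (((h' x - (a ^ 2 - (u x) ^ 2)) + (h x - u x) * (h x + u x)) * Real.exp (F x)) x := by
      intro x hx
      have hxT : x < T := lt_trans hx.2 hs₀T
      have h1 := (hderiv x ⟨le_of_lt hx.1, lt_trans hxT hTη⟩).fun_sub (huderiv x hxT)
      have h2 := ((hFderiv x hx).exp)
      have : HasDerivAt w _ x := h1.fun_mul h2
      convert this using 1
      ring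
    have hwnonpos : ∀ x ∈ Set.Ioo (0:ℝ) s₀,
        ((h' x - (a ^ 2 - (u x) ^ 2)) + (h x - u x) * (h x + u x)) * Real.exp (F x) ≤ 0 := by
      intro x hx
      have hxT : x < T := lt_trans hx.2 hs₀T
      have hR := hRic x ⟨le_of_lt hx.1, lt_trans hxT hTη⟩
      have : (h' x - (a ^ 2 - (u x) ^ 2)) + (h x - u x) * (h x + u x)
          = h' x - (a ^ 2 - (h x) ^ 2) := by ring
      rw [this]
      apply mul_nonpos_of_nonpos_of_nonneg
      · linarith
      · exact (Real.exp_pos _).le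
    have hanti : AntitoneOn w (Set.Icc 0 s₀) := by
      apply antitoneOn_of_deriv_nonpos (convex_Icc 0 s₀) hwcont
      · rw [interior_Icc]
        intro x hx
        exact (hwderiv x hx).differentiableAt.differentiableWithinAt
      · rw [interior_Icc]
        intro x hx
        rw [(hwderiv x hx).deriv]
        exact hwnonpos x hx
    have hw0 : w 0 ≤ 0 := by
      have hF0 : F 0 = 0 := by simp [hFdef]
      simp only [hwdef, hF0, Real.exp_zero, mul_one]
      linarith
    have := hanti (Set.left_mem_Icc.2 hs₀0) (Set.right_mem_Icc.2 hs₀0) hs₀0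
    have hws : w s₀ ≤ 0 := le_trans this hw0
    have hexp := Real.exp_pos (F s₀)
    simp only [hwdef] at hws
    nlinarith [hws]
  constructor
  · exact hcomp
  · -- blowup
    have hmap : Tendsto (fun s => a * T - a * s) (nhdsWithin T (Set.Iio T))
        (nhdsWithin 0 (Set.Ioi 0)) := by
      apply tendsto_nhdsWithin_of_tendsto_nhds_of_eventually_within
      · have hc : Continuous (fun s : ℝ => a * T - a * s) := by continuity
        have : Tendsto (fun s => a * T - a * s) (nhds T) (nhds (a * T - a * T)) :=
          hc.tendsto T
        simpa using this.mono_left nhdsWithin_le_nhds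
      · filter_upwards [self_mem_nhdsWithin] with s hs
        simp only [Set.mem_Iio] at hs
        have : 0 < a * T - a * s := by nlinarith
        exact this
    have hsinhT : Tendsto (fun s => Real.sinh (a * T - a * s)) (nhdsWithin T (Set.Iio T))
        (nhdsWithin 0 (Set.Ioi 0)) := by
      apply tendsto_nhdsWithin_of_tendsto_nhds_of_eventually_within
      · have h1 : Tendsto Real.sinh (nhds 0) (nhds (Real.sinh 0)) :=
          Real.continuous_sinh.tendsto 0
        rw [Real.sinh_zero] at h1
        exact h1.comp (hmap.mono_right nhdsWithin_le_nhds)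
      · filter_upwards [self_mem_nhdsWithin] with s hs
        simp only [Set.mem_Iio] at hs
        exact hsinh s hs
    have hinv : Tendsto (fun s => (Real.sinh (a * T - a * s))⁻¹)
        (nhdsWithin T (Set.Iio T)) atTop := tendsto_inv_nhdsGT_zero.comp hsinhT
    have hcoshT : Tendsto (fun s => -a * Real.cosh (a * T - a * s))
        (nhdsWithin T (Set.Iio T)) (nhds (-a)) := by
      have hc : Continuous (fun s : ℝ => -a * Real.cosh (a * T - a * s)) := by fun_prop
      have : Tendsto (fun s => -a * Real.cosh (a * T - a * s)) (nhds T)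
          (nhds (-a * Real.cosh (a * T - a * T))) := hc.tendsto T
      simp only [sub_self, Real.cosh_zero, mul_one] at this
      exact this.mono_left nhdsWithin_le_nhds
    have hu_bot : Tendsto u (nhdsWithin T (Set.Iio T)) atBot := by
      have := hcoshT.neg_mul_atTop (by linarith : -a < 0) hinv
      apply this.congr
      intro s
      simp [hudef, div_eq_mul_inv]
      ring
    apply tendsto_atBot_mono' _ _ hu_bot
    filter_upwards [Ioo_mem_nhdsLT_of_mem (Set.right_mem_Ioc.2 hT0)] with s hs
    exact hcomp s ⟨le_of_lt hs.1, hs.2⟩
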